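/- Let u be a C² convex function on a bounded convex domain Ω ⊂ ℝ^n with min_Ω u = 0 attained at an interior point, u = 1 on ∂Ω, and suppose γ^{-1}B_R(x₀) ⊂ Ω ⊂ γB_R(x₀). Then ∫_{B_{R/(2γ)}(x₀)} det(D²u) dx ≤ 2^n ω_n γ^n R^{-n}. -/

import Mathlib

/-!
The gradient map `∇u` has derivative `D²u`, which is positive semidefinite because `u` is
convex. Where `det D²u ≠ 0` it is positive definite, and then the monotonicity of `∇u` along
segments forces `∇u` to be injective. So by the change of variables formula `∫_B det D²u` is
the measure of `∇u(B ∩ {det D²u ≠ 0})`. On `B = B_{R/(2γ)}(x₀)` we have `|∇u| ≤ 2γ/R`: the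
ball of radius `R/(2γ)` around `x ∈ B` lies in `Ω`, where `0 ≤ u ≤ 1` (the upper bound by the
maximum principle for convex functions), and the supporting hyperplane of `u` at `x` stays
below `u` on that ball.
-/

open MeasureTheory Filter Bornology Metric Set
open scoped RealInnerProductSpace ENNReal

noncomputable section

/-- Hessian matrix of `u` at `x`. -/
def hess {n : ℕ} (u : EuclideanSpace ℝ (Fin n) → ℝ) (x : EuclideanSpace ℝ (Fin n)) :
    Matrix (Fin n) (Fin n) ℝ :=
  fun i j => iteratedFDeriv ℝ 2 u x ![EuclideanSpace.single i 1, EuclideanSpace.single j 1]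

/-- `k`-th elementary symmetric function of the eigenvalues of a matrix,
computed as the sum of its principal `k × k` minors. -/
def Smat {n : ℕ} (k : ℕ) (M : Matrix (Fin n) (Fin n) ℝ) : ℝ :=
  ∑ s ∈ Finset.univ.powersetCard k, (M.submatrix (Subtype.val : s → Fin n) Subtype.val).det

open AffineMap InnerProductSpace
open scoped Topology Gradient

section Line

variable {F : Type*} [NormedAddCommGroup F] [NormedSpace ℝ F] {s : Set F} {f : F → ℝ}

theorem ConvexOn.fderiv_apply_sub_le (hf : ConvexOn ℝ s f) {x y : F} (hx : x ∈ s) (hy : y ∈ s)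
    (hfx : DifferentiableAt ℝ f x) : fderiv ℝ f x (y - x) ≤ f y - f x := by
  have hfx' : HasFDerivAt f (fderiv ℝ f x) (lineMap x y (0 : ℝ)) := by
    simpa using hfx.hasFDerivAt
  simpa [slope] using (hf.comp_affineMap (lineMap x y)).le_slope_of_hasDerivAt
    (by simpa using hx) (by simpa using hy) zero_lt_one (hfx'.comp_hasDerivAt 0 hasDerivAt_lineMap)

theorem hasDerivAt_fderiv_lineMap (hf : ContDiff ℝ 2 f) (x y : F) (t : ℝ) :
    HasDerivAt (fun t : ℝ => fderiv ℝ f (lineMap x y t) (y - x))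
      (fderiv ℝ (fderiv ℝ f) (lineMap x y t) (y - x) (y - x)) t := by
  have hf' : Differentiable ℝ (fderiv ℝ f) :=
    (hf.fderiv_right (m := 1) le_rfl).differentiable one_ne_zero
  simpa using ((hf' _).hasFDerivAt.comp_hasDerivAt t hasDerivAt_lineMap).clm_apply
    (hasDerivAt_const t (y - x))

theorem ConvexOn.monotoneOn_fderiv_lineMap (hf : ConvexOn ℝ s f)
    (hfd : ∀ z ∈ s, DifferentiableAt ℝ f z) (x y : F) :
    MonotoneOn (fun t : ℝ => fderiv ℝ f (lineMap x y t) (y - x)) (lineMap x y ⁻¹' s) := by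
  have hderiv : ∀ t ∈ (lineMap x y : ℝ → F) ⁻¹' s,
      HasDerivAt (f ∘ (lineMap x y : ℝ →ᵃ[ℝ] F)) (fderiv ℝ f (lineMap x y t) (y - x)) t :=
    fun t ht => (hfd _ ht).hasFDerivAt.comp_hasDerivAt t hasDerivAt_lineMap
  intro a ha b hb hab
  simpa only [(hderiv a ha).deriv, (hderiv b hb).deriv] using
    (hf.comp_affineMap (lineMap x y)).monotoneOn_deriv
      (fun t ht => (hderiv t ht).differentiableAt) ha hb hab

theorem ConvexOn.fderiv_fderiv_apply_self_nonneg (hf : ConvexOn ℝ s f) (hf2 : ContDiff ℝ 2 f)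
    {x : F} (hx : x ∈ interior s) (v : F) : 0 ≤ fderiv ℝ (fderiv ℝ f) x v v := by
  have hS : (lineMap x (x + v) : ℝ → F) ⁻¹' s ∈ 𝓝 0 :=
    lineMap_continuous.continuousAt.preimage_mem_nhds
      (by simpa using mem_interior_iff_mem_nhds.1 hx)
  have hacc : AccPt (0 : ℝ) (𝓟 ((lineMap x (x + v) : ℝ → F) ⁻¹' s)) :=
    ((PerfectSpace.univ_preperfect _ (mem_univ 0)).nhds_inter hS).mono
      (principal_mono.2 inter_subset_left)
  simpa using ((hasDerivAt_fderiv_lineMap hf2 x (x + v) 0).hasDerivWithinAt).nonneg_of_monotoneOn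
    hacc (hf.monotoneOn_fderiv_lineMap (fun z _ => hf2.differentiable (by norm_num) z) x (x + v))

theorem ConvexOn.fderiv_fderiv_apply_sub_nonpos_of_fderiv_eq (hf : ConvexOn ℝ s f)
    (hf2 : ContDiff ℝ 2 f) {x y : F} (hx : x ∈ s) (hy : y ∈ s)
    (hxy : fderiv ℝ f x = fderiv ℝ f y) : fderiv ℝ (fderiv ℝ f) x (y - x) (y - x) ≤ 0 := by
  set φ := fun t : ℝ => fderiv ℝ f (lineMap x y t) (y - x)
  have hmono : MonotoneOn φ (Icc 0 1) :=
    (hf.monotoneOn_fderiv_lineMap (fun z _ => hf2.differentiable (by norm_num) z) x y).mono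
      fun t ht => hf.1.lineMap_mem hx hy ht
  have hφ : φ 0 = φ 1 := by simp [φ, hxy]
  have hanti : AntitoneOn φ (Icc 0 1) := fun a ha b hb _ =>
    calc φ b ≤ φ 1 := hmono hb ⟨zero_le_one, le_rfl⟩ hb.2
      _ = φ 0 := hφ.symm
      _ ≤ φ a := hmono ⟨le_rfl, zero_le_one⟩ ha ha.1
  have hacc : AccPt (0 : ℝ) (𝓟 (Icc 0 1)) := by
    rw [accPt_principal_iff_nhdsWithin, Icc_sdiff_left]
    exact left_nhdsWithin_Ioc_neBot zero_lt_one
  simpa using ((hasDerivAt_fderiv_lineMap hf2 x y 0).hasDerivWithinAt).nonpos_of_antitoneOn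
    hacc hanti

end Line

section Gradient

variable {F : Type*} [NormedAddCommGroup F] [InnerProductSpace ℝ F] [CompleteSpace F]
  {s : Set F} {f : F → ℝ}

-- Over `ℝ` the conjugate-linear `(toDual ℝ F).symm` is definitionally linear.
theorem hasFDerivAt_gradient (hf : ContDiff ℝ 2 f) (x : F) :
    HasFDerivAt (∇ f) ((toDual ℝ F).symm.toContinuousLinearEquiv.toContinuousLinearMap ∘L
      fderiv ℝ (fderiv ℝ f) x) x :=
  ((toDual ℝ F).symm : StrongDual ℝ F ≃ₗᵢ[ℝ] F).hasFDerivAt.comp x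
    (((hf.fderiv_right (m := 1) le_rfl).differentiable one_ne_zero) x).hasFDerivAt

theorem inner_fderiv_gradient_apply (hf : ContDiff ℝ 2 f) (x v w : F) :
    ⟪fderiv ℝ (∇ f) x v, w⟫ = fderiv ℝ (fderiv ℝ f) x v w := by
  simp [(hasFDerivAt_gradient hf x).fderiv, toDual_symm_apply]

theorem ConvexOn.isPositive_fderiv_gradient (hf : ConvexOn ℝ s f) (hf2 : ContDiff ℝ 2 f)
    {x : F} (hx : x ∈ interior s) : (fderiv ℝ (∇ f) x).IsPositive := by
  refine (ContinuousLinearMap.isPositive_iff _).2 ⟨fun v w => ?_, fun v => ?_⟩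
  · rw [ContinuousLinearMap.coe_coe, real_inner_comm (fderiv ℝ (∇ f) x w),
      inner_fderiv_gradient_apply hf2, inner_fderiv_gradient_apply hf2,
      (hf2.contDiffAt.isSymmSndFDerivAt (by simp)).eq]
  · rw [inner_fderiv_gradient_apply hf2]
    exact hf.fderiv_fderiv_apply_self_nonneg hf2 hx v

theorem ConvexOn.norm_gradient_le (hf : ConvexOn ℝ s f) {x : F} (hfx : DifferentiableAt ℝ f x)
    {r M : ℝ} (hr : 0 < r) (hball : closedBall x r ⊆ s) (hM : ∀ y ∈ s, f y ≤ M) :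
    ‖∇ f x‖ ≤ (M - f x) / r := by
  set y := x + (r / ‖∇ f x‖) • ∇ f x
  have hy : y ∈ closedBall x r := by
    rcases eq_or_ne ‖∇ f x‖ 0 with h | h
    · simp [y, h, hr.le]
    · simp [y, norm_smul, abs_of_pos hr, h]
  have hslope : r * ‖∇ f x‖ = fderiv ℝ f x (y - x) := by
    rw [← inner_gradient_left, add_sub_cancel_left, real_inner_smul_right,
      real_inner_self_eq_norm_sq]
    rcases eq_or_ne ‖∇ f x‖ 0 with h | h
    · simp [h]
    · field_simp
  rw [le_div_iff₀ hr, mul_comm, hslope]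
  exact (hf.fderiv_apply_sub_le (hball (mem_closedBall_self hr.le)) (hball hy) hfx).trans
    (by linarith [hM y (hball hy)])

end Gradient

theorem Bornology.IsBounded.exists_nonneg_add_smul_mem_frontier {E : Type*}
    [NormedAddCommGroup E] [NormedSpace ℝ E] {s : Set E} (hs : IsBounded s) {y d : E}
    (hy : y ∈ s) (hd : d ≠ 0) : ∃ t : ℝ, 0 ≤ t ∧ y + t • d ∈ frontier s := by
  have : PreconnectedSpace (Ici (0 : ℝ)) := Subtype.preconnectedSpace isPreconnected_Ici
  let g : Ici (0 : ℝ) → E := fun t => y + (t : ℝ) • d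
  obtain ⟨r, hr⟩ := hs.subset_ball y
  have hout : g ⟨|r| / ‖d‖, div_nonneg (abs_nonneg r) (norm_nonneg d)⟩ ∉ s := fun h =>
    (le_abs_self r).not_gt (by simpa [g, norm_smul, hd] using hr h)
  have hin : g ⟨0, le_refl (0 : ℝ)⟩ ∈ s := by simpa [g] using hy
  have hP : (g ⁻¹' s).Nonempty ∧ g ⁻¹' s ≠ univ :=
    ⟨⟨_, hin⟩, fun h => hout (show _ ∈ g ⁻¹' s from h ▸ mem_univ _)⟩
  obtain ⟨t, ht⟩ := nonempty_frontier_iff.2 hP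
  exact ⟨t, t.2, (by fun_prop : Continuous g).frontier_preimage_subset s ht⟩

theorem ConvexOn.le_of_forall_frontier_le {E : Type*} [NormedAddCommGroup E] [NormedSpace ℝ E]
    [Nontrivial E] {s : Set E} {f : E → ℝ} {c : ℝ} (hs : IsBounded s)
    (hf : ConvexOn ℝ (closure s) f) (hfr : ∀ x ∈ frontier s, f x ≤ c) {y : E} (hy : y ∈ s) :
    f y ≤ c := by
  obtain ⟨d, hd⟩ := exists_ne (0 : E)
  obtain ⟨a, ha, ha'⟩ := hs.exists_nonneg_add_smul_mem_frontier hy hd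
  obtain ⟨b, hb, hb'⟩ := hs.exists_nonneg_add_smul_mem_frontier hy (neg_ne_zero.2 hd)
  have hseg : y ∈ segment ℝ (y + a • d) (y + b • -d) := by
    have h₁ : y - (y + a • d) = a • -d := by module
    have h₂ : y + b • -d - y = b • -d := by module
    rw [mem_segment_iff_sameRay, h₁, h₂]
    exact ((SameRay.refl (-d)).nonneg_smul_left ha).nonneg_smul_right hb
  exact (hf.le_on_segment (frontier_subset_closure ha') (frontier_subset_closure hb') hseg).trans
    (max_le (hfr _ ha') (hfr _ hb'))

theorem setIntegral_abs_det_fderiv_le_measureReal {E : Type*} [NormedAddCommGroup E]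
    [NormedSpace ℝ E] [FiniteDimensional ℝ E] [MeasurableSpace E] [BorelSpace E]
    (μ : Measure E) [μ.IsAddHaarMeasure] {f : E → E} {f' : E → E →L[ℝ] E} {s t : Set E}
    (hs : MeasurableSet s) (hf' : ∀ x ∈ s, HasFDerivWithinAt f (f' x) s x) (hf : InjOn f s)
    (hst : f '' s ⊆ t) (ht : μ t ≠ ∞) : ∫ x in s, |(f' x).det| ∂μ ≤ μ.real t := by
  have := integral_image_eq_integral_abs_det_fderiv_smul μ hs hf' hf fun _ => (1 : ℝ)
  simp only [setIntegral_const, smul_eq_mul, mul_one] at this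
  rw [← this]
  exact measureReal_mono hst ht

section Euclidean

variable {n : ℕ} {s : Set (EuclideanSpace ℝ (Fin n))} {u : EuclideanSpace ℝ (Fin n) → ℝ}

theorem toEuclideanLin_hess (hu : ContDiff ℝ 2 u) (x : EuclideanSpace ℝ (Fin n)) :
    (hess u x).toEuclideanLin = (fderiv ℝ (∇ u) x : _ →ₗ[ℝ] _) := by
  refine (EuclideanSpace.basisFun (Fin n) ℝ).toBasis.ext fun j => ?_
  ext i
  have h :=
    inner_fderiv_gradient_apply hu x (EuclideanSpace.single j 1) (EuclideanSpace.single i 1)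
  rw [EuclideanSpace.inner_single_right, (hu.contDiffAt.isSymmSndFDerivAt (by simp)).eq] at h
  simpa [Matrix.toLpLin_apply, hess, iteratedFDeriv_two_apply] using h.symm

theorem det_hess_eq_det_fderiv_gradient (hu : ContDiff ℝ 2 u) (x : EuclideanSpace ℝ (Fin n)) :
    (hess u x).det = (fderiv ℝ (∇ u) x).det := by
  rw [ContinuousLinearMap.det, ← toEuclideanLin_hess hu]
  exact (LinearMap.det_toLin (PiLp.basisFun 2 ℝ (Fin n)) _).symm

theorem ConvexOn.posSemidef_hess (hf : ConvexOn ℝ s u) (hu : ContDiff ℝ 2 u)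
    {x : EuclideanSpace ℝ (Fin n)} (hx : x ∈ interior s) : (hess u x).PosSemidef := by
  rw [← Matrix.isPositive_toEuclideanLin_iff, toEuclideanLin_hess hu]
  exact (hf.isPositive_fderiv_gradient hu hx).toLinearMap

theorem ConvexOn.injOn_gradient (hf : ConvexOn ℝ s u) (hs : IsOpen s) (hu : ContDiff ℝ 2 u) :
    InjOn (∇ u) {x ∈ s | (hess u x).det ≠ 0} := by
  rintro x ⟨hxs, hx⟩ y ⟨hys, -⟩ hxy
  have hpos := ((hf.posSemidef_hess hu (by rwa [hs.interior_eq])).posDef_iff_det_ne_zero).2 hx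
  have hnonpos : fderiv ℝ (fderiv ℝ u) x (y - x) (y - x) ≤ 0 :=
    hf.fderiv_fderiv_apply_sub_nonpos_of_fderiv_eq hu hxs hys
      (by rw [← toDual_gradient, hxy, toDual_gradient])
  by_contra hne
  have hv : (y - x).ofLp ≠ 0 := by rw [Ne, WithLp.ofLp_eq_zero, sub_eq_zero]; exact Ne.symm hne
  have hq := hpos.dotProduct_mulVec_pos hv
  have hT : fderiv ℝ (∇ u) x (y - x) = (hess u x).toEuclideanLin (y - x) := by
    rw [toEuclideanLin_hess hu]; rfl
  rw [← inner_fderiv_gradient_apply hu, hT] at hnonpos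
  exact hnonpos.not_gt (by simpa [Matrix.toLpLin_apply, EuclideanSpace.inner_eq_star_dotProduct,
    dotProduct_comm] using hq)

theorem continuous_det_hess (hu : ContDiff ℝ 2 u) : Continuous fun x => (hess u x).det := by
  refine Continuous.matrix_det (continuous_pi fun i => continuous_pi fun j => ?_)
  exact (continuous_eval_const _).comp (hu.continuous_iteratedFDeriv le_rfl)

theorem ConvexOn.setIntegral_det_hess_le_measureReal {B t : Set (EuclideanSpace ℝ (Fin n))}
    (hf : ConvexOn ℝ s u) (hs : IsOpen s) (hu : ContDiff ℝ 2 u) (hB : MeasurableSet B)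
    (hBs : B ⊆ s) (hBt : ∇ u '' B ⊆ t) (ht : volume t ≠ ∞) :
    ∫ x in B, (hess u x).det ≤ volume.real t := by
  set S := {x ∈ B | (hess u x).det ≠ 0}
  have hS : MeasurableSet S :=
    hB.inter ((continuous_det_hess hu).measurable (measurableSet_singleton 0).compl)
  calc ∫ x in B, (hess u x).det = ∫ x in S, |(fderiv ℝ (∇ u) x).det| := by
        rw [setIntegral_eq_of_subset_of_forall_sdiff_eq_zero hB (sep_subset _ _)
          fun x hx => by by_contra h; exact hx.2 ⟨hx.1, h⟩]
        refine setIntegral_congr_fun hS fun x hx => ?_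
        rw [← det_hess_eq_det_fderiv_gradient hu,
          abs_of_nonneg (hf.posSemidef_hess hu (by rw [hs.interior_eq]; exact hBs hx.1)).det_nonneg]
    _ ≤ volume.real t :=
        setIntegral_abs_det_fderiv_le_measureReal volume hS
          (fun x _ => (hasFDerivAt_gradient hu x).differentiableAt.hasFDerivAt.hasFDerivWithinAt)
          ((hf.injOn_gradient hs hu).mono fun x (hx : x ∈ S) =>
            show x ∈ s ∧ _ from ⟨hBs hx.1, hx.2⟩)
          ((image_mono (sep_subset _ _)).trans hBt) ht

end Euclidean

theorem hessian_integral_upper_bound_general (n : ℕ) (hn : 0 < n)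
    (Ω : Set (EuclideanSpace ℝ (Fin n))) (hΩo : IsOpen Ω) (hΩc : Convex ℝ Ω)
    (hΩb : IsBounded Ω)
    (u : EuclideanSpace ℝ (Fin n) → ℝ) (hu : ContDiff ℝ 2 u)
    (hconv : ConvexOn ℝ (closure Ω) u)
    (hmin : ∃ z ∈ Ω, u z = 0 ∧ ∀ x ∈ Ω, u z ≤ u x)
    (hbd : ∀ x ∈ frontier Ω, u x = 1)
    (γ R : ℝ) (x₀ : EuclideanSpace ℝ (Fin n)) (hγ : 1 ≤ γ) (hR : 0 < R)
    (hball₁ : Metric.ball x₀ (γ⁻¹ * R) ⊆ Ω) :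
    ∫ x in Metric.ball x₀ (R / (2 * γ)), (hess u x).det ≤
      2 ^ n * (volume (Metric.ball (0 : EuclideanSpace ℝ (Fin n)) 1)).toReal * γ ^ n *
        R ^ (-(n : ℝ)) := by
  have : Nonempty (Fin n) := ⟨⟨0, hn⟩⟩
  obtain ⟨z, -, hz, hzmin⟩ := hmin
  have hγ0 : 0 < γ := by linarith
  set r := R / (2 * γ) with hr_def
  have hr : 0 < r := by positivity
  have h2r : r + r = γ⁻¹ * R := by rw [hr_def]; field_simp; ring
  have hball : ∀ x ∈ ball x₀ r, closedBall x r ⊆ Ω := fun x hx =>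
    (closedBall_subset_ball' (by rw [mem_ball] at hx; linarith)).trans hball₁
  have hBΩ : ball x₀ r ⊆ Ω := fun x hx => hball x hx (mem_closedBall_self hr.le)
  have hconvΩ : ConvexOn ℝ Ω u := hconv.subset subset_closure hΩc
  have hu_le : ∀ x ∈ Ω, u x ≤ 1 := fun x hx =>
    hconv.le_of_forall_frontier_le hΩb (fun y hy => (hbd y hy).le) hx
  have hgrad : ∀ x ∈ ball x₀ r, ∇ u x ∈ closedBall 0 (2 * γ / R) := fun x hx => by
    rw [mem_closedBall_zero_iff]
    calc ‖∇ u x‖ ≤ (1 - u x) / r :=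
          hconvΩ.norm_gradient_le (hu.differentiable (by norm_num) x) hr (hball x hx) hu_le
      _ ≤ 1 / r := by gcongr; linarith [hzmin x (hBΩ hx)]
      _ = 2 * γ / R := by rw [hr_def, one_div_div]
  calc ∫ x in ball x₀ r, (hess u x).det
      ≤ volume.real (closedBall (0 : EuclideanSpace ℝ (Fin n)) (2 * γ / R)) :=
        hconvΩ.setIntegral_det_hess_le_measureReal hΩo hu measurableSet_ball hBΩ
          (image_subset_iff.2 hgrad) measure_closedBall_lt_top.ne
    _ = _ := by
        rw [measureReal_def, Measure.addHaar_closedBall _ _ (by positivity),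
          finrank_euclideanSpace_fin, ENNReal.toReal_mul, ENNReal.toReal_ofReal (by positivity),
          Real.rpow_neg hR.le, Real.rpow_natCast, div_pow, mul_pow]
        ring

theorem hessian_integral_upper_bound (n : ℕ) (hn : 0 < n)
    (Ω : Set (EuclideanSpace ℝ (Fin n))) (hΩo : IsOpen Ω) (hΩc : Convex ℝ Ω)
    (hΩb : IsBounded Ω)
    (u : EuclideanSpace ℝ (Fin n) → ℝ) (hu : ContDiff ℝ 2 u)
    (hconv : ConvexOn ℝ (closure Ω) u)
    (hmin : ∃ z ∈ Ω, u z = 0 ∧ ∀ x ∈ Ω, u z ≤ u x)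
    (hbd : ∀ x ∈ frontier Ω, u x = 1)
    (γ R : ℝ) (x₀ : EuclideanSpace ℝ (Fin n)) (hγ : 1 ≤ γ) (hR : 0 < R)
    (hball₁ : Metric.ball x₀ (γ⁻¹ * R) ⊆ Ω) (hball₂ : Ω ⊆ Metric.ball x₀ (γ * R)) :
    ∫ x in Metric.ball x₀ (R / (2 * γ)), (hess u x).det ≤
      2 ^ n * (volume (Metric.ball (0 : EuclideanSpace ℝ (Fin n)) 1)).toReal * γ ^ n *
        R ^ (-(n : ℝ)) :=
  hessian_integral_upper_bound_general n hn Ω hΩo hΩc hΩb u hu hconv hmin hbd γ R x₀ hγ hR hball₁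

end
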